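/- arXiv:math/0609172 — 2 statements merged into one kernel-verified Lean document; each statement's English description precedes it below -/
import Mathlib

section
/- Let I be a proper two-sided ideal of a ℤ-graded ring R. The map α : R[t]/⟨I*⟩ → R/I induced by F ↦ F_* (evaluation of t at 1) is a well-defined surjective ring homomorphism whose kernel is the ideal ⟨1 − t̄⟩, where t̄ is the image of t in R[t]/⟨I*⟩. -/
open DirectSum Polynomial
open scoped Classical

variable {R : Type*} [Ring R]

/-- The top degree of `f` (junk value `0` for `f = 0`). -/
noncomputable def deg (A : ℤ → AddSubgroup R) [GradedRing A] (f : R) : ℤ :=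
  WithBot.unbotD 0 ((DirectSum.decompose A f).support.max)

/-- The leading homogeneous part `LH f` of `f`. -/
noncomputable def LH (A : ℤ → AddSubgroup R) [GradedRing A] (f : R) : R :=
  (DirectSum.decompose A f (deg A f) : R)

/-- The homogenization `f*` of `f` with respect to the central degree-one variable `t = X`. -/
noncomputable def homog (A : ℤ → AddSubgroup R) [GradedRing A] (f : R) : Polynomial R :=
  ∑ i ∈ (DirectSum.decompose A f).support,
    Polynomial.C (DirectSum.decompose A f i : R) * Polynomial.X ^ (deg A f - i).toNat

/-- Dehomogenization `F ↦ F_*`, i.e. evaluation of `t = X` at `1`. -/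
noncomputable def dehom : Polynomial R →+* R :=
  Polynomial.eval₂RingHom' (RingHom.id R) 1 (fun a => Commute.one_right a)

/-- The degree-`p` component of the mixed gradation on `R[t]`, spanned by the
elements `a * t^j` with `a ∈ A i` and `i + j = p`. -/
noncomputable def mixed (A : ℤ → AddSubgroup R) (p : ℤ) : AddSubgroup (Polynomial R) :=
  AddSubgroup.closure
    { F | ∃ (i : ℤ) (j : ℕ) (a : R), a ∈ A i ∧ i + (j : ℤ) = p ∧
        F = Polynomial.C a * Polynomial.X ^ j }

/-!
Modulo `1 - t̄`, every `F ∈ R[t]` is congruent to the constant `F_*`, since `t̄ ≡ 1`. For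
`F_* ∈ I` this constant is in turn congruent to `(F_*)*`, which vanishes in `R[t]/⟨I*⟩`.
Hence the kernel of `α` lies in `⟨1 - t̄⟩`; the reverse inclusion is `(1 - t)_* = 0`.
-/

@[simp]
lemma dehom_C (a : R) : dehom (C a) = a := by
  simp [dehom]

@[simp]
lemma dehom_X : dehom (X : R[X]) = 1 := by
  simp [dehom]

lemma dehom_homog (A : ℤ → AddSubgroup R) [GradedRing A] (f : R) :
    dehom (homog A f) = f := by
  simpa [homog] using DirectSum.sum_support_decompose A f

lemma map_C_dehom {S : Type*} [Semiring S] (ψ : R[X] →+* S) (hX : ψ X = 1) (F : R[X]) :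
    ψ (C (dehom F)) = ψ F :=
  RingHom.congr_fun (f := (ψ.comp C).comp dehom)
    (ringHom_ext (fun a => by simp) (by simp [hX])) F

lemma TwoSidedIdeal.mk'_eq_zero_iff {S : Type*} [Ring S] (K : TwoSidedIdeal S) (x : S) :
    K.ringCon.mk' x = 0 ↔ x ∈ K := by
  rw [← TwoSidedIdeal.mem_ker, TwoSidedIdeal.ker_ringCon_mk']

section dehomQuot

variable (A : ℤ → AddSubgroup R) [GradedRing A] (I : TwoSidedIdeal R)

/-- The ideal `⟨I*⟩` of `R[t]`. -/
noncomputable abbrev homogIdeal : TwoSidedIdeal R[X] :=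
  TwoSidedIdeal.span (homog A '' (I : Set R))

lemma homogIdeal_le_ker_dehom :
    homogIdeal A I ≤ TwoSidedIdeal.ker (I.ringCon.mk'.comp dehom) := by
  rw [TwoSidedIdeal.span_le]
  rintro _ ⟨f, hf, rfl⟩
  rwa [SetLike.mem_coe, TwoSidedIdeal.mem_ker, RingHom.comp_apply, dehom_homog,
    TwoSidedIdeal.mk'_eq_zero_iff]

/-- The map `α : R[t]/⟨I*⟩ → R/I` induced by dehomogenization. -/
noncomputable def dehomQuot : (homogIdeal A I).ringCon.Quotient →+* I.ringCon.Quotient :=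
  (homogIdeal A I).ringCon.lift (I.ringCon.mk'.comp dehom)
    (TwoSidedIdeal.ringCon_le_iff.mp (homogIdeal_le_ker_dehom A I))

variable {A I}

lemma dehomQuot_mk' (F : R[X]) :
    dehomQuot A I ((homogIdeal A I).ringCon.mk' F) = I.ringCon.mk' (dehom F) :=
  rfl

lemma dehomQuot_surjective : Function.Surjective (dehomQuot A I) := by
  intro y
  obtain ⟨r, rfl⟩ := I.ringCon.mk'_surjective y
  exact ⟨(homogIdeal A I).ringCon.mk' (C r), by rw [dehomQuot_mk', dehom_C]⟩

lemma dehomQuot_eq_zero_iff (x : (homogIdeal A I).ringCon.Quotient) :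
    dehomQuot A I x = 0 ↔
      x ∈ TwoSidedIdeal.span {1 - (homogIdeal A I).ringCon.mk' X} := by
  set π := (homogIdeal A I).ringCon.mk'
  set K := TwoSidedIdeal.span {1 - π X}
  constructor
  · obtain ⟨F, rfl⟩ := (homogIdeal A I).ringCon.mk'_surjective x
    intro hF
    rw [dehomQuot_mk', TwoSidedIdeal.mk'_eq_zero_iff] at hF
    set ψ := K.ringCon.mk'.comp π
    have hψX : ψ X = 1 := by
      have : 1 - π X ∈ K := TwoSidedIdeal.subset_span rfl
      rwa [← TwoSidedIdeal.mk'_eq_zero_iff, map_sub, map_one, sub_eq_zero, eq_comm] at this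
    have hπ_homog : π (homog A (dehom F)) = 0 :=
      (TwoSidedIdeal.mk'_eq_zero_iff _ _).mpr
        (TwoSidedIdeal.subset_span (Set.mem_image_of_mem _ hF))
    rw [← TwoSidedIdeal.mk'_eq_zero_iff]
    calc ψ F = ψ (C (dehom F)) := (map_C_dehom ψ hψX F).symm
      _ = ψ (homog A (dehom F)) := by rw [← map_C_dehom ψ hψX (homog A _), dehom_homog]
      _ = 0 := by rw [RingHom.comp_apply, hπ_homog, map_zero]
  · intro hx
    rw [← TwoSidedIdeal.mem_ker]
    refine TwoSidedIdeal.span_le.mpr ?_ hx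
    rintro _ rfl
    rw [SetLike.mem_coe, TwoSidedIdeal.mem_ker, map_sub, map_one, dehomQuot_mk', dehom_X,
      map_one, sub_self]

end dehomQuot

theorem stmt7_general (A : ℤ → AddSubgroup R) [GradedRing A] (I : TwoSidedIdeal R) :
    ∃ α : (TwoSidedIdeal.span (homog A '' (I : Set R))).ringCon.Quotient →+*
        I.ringCon.Quotient,
      (∀ F : Polynomial R,
        α ((TwoSidedIdeal.span (homog A '' (I : Set R))).ringCon.mk' F) =
          I.ringCon.mk' (dehom F)) ∧
      Function.Surjective α ∧
      (∀ x, α x = 0 ↔ x ∈ TwoSidedIdeal.span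
        {1 - (TwoSidedIdeal.span (homog A '' (I : Set R))).ringCon.mk' Polynomial.X}) :=
  ⟨dehomQuot A I, dehomQuot_mk', dehomQuot_surjective, dehomQuot_eq_zero_iff⟩

/-- For a proper two-sided ideal `I` of `R`, dehomogenization induces a
well-defined surjective ring homomorphism `α : R[t]/⟨I*⟩ → R/I` with kernel `⟨1 - t̄⟩`. -/
theorem stmt7 (A : ℤ → AddSubgroup R) [GradedRing A] (I : TwoSidedIdeal R) (hI : I ≠ ⊤) :
    ∃ α : (TwoSidedIdeal.span (homog A '' (I : Set R))).ringCon.Quotient →+*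
        I.ringCon.Quotient,
      (∀ F : Polynomial R,
        α ((TwoSidedIdeal.span (homog A '' (I : Set R))).ringCon.mk' F) =
          I.ringCon.mk' (dehom F)) ∧
      Function.Surjective α ∧
      (∀ x, α x = 0 ↔ x ∈ TwoSidedIdeal.span
        {1 - (TwoSidedIdeal.span (homog A '' (I : Set R))).ringCon.mk' Polynomial.X}) :=
  stmt7_general A I
end

section
/- Let R = K⟨X⟩ be a free algebra over a field K with a graded monomial ordering ≽_{gr} extended to R[t] by w₁t^{r₁} ≻ w₂t^{r₂} iff w₁ ≻ w₂ or (w₁ = w₂ and r₁ > r₂). For a two-sided ideal I of R and 𝓖 ⊆ I: 𝓖 is a Gröbner basis of I in R if and only if 𝓖* = { g* : g ∈ 𝓖 } is a Gröbner basis of the homogenization ideal ⟨I*⟩ in R[t]. -/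
open Polynomial
open scoped Classical

variable {X K : Type*} [Field K] [LinearOrder (FreeMonoid X)]

/-- The leading monomial (as a word) of an element of the free algebra
`K⟨X⟩ = MonoidAlgebra K (FreeMonoid X)`, with junk value the empty word for `0`. -/
noncomputable def lm (f : MonoidAlgebra K (FreeMonoid X)) : FreeMonoid X :=
  WithBot.unbotD 1 f.coeff.support.max

/-- The set of leading monomials (viewed as elements of the free algebra) of the
nonzero elements of `S`. -/
noncomputable def LMset (S : Set (MonoidAlgebra K (FreeMonoid X))) :
    Set (MonoidAlgebra K (FreeMonoid X)) :=
  (fun f => MonoidAlgebra.single (lm f) (1 : K)) '' (S \ {0})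

/-- The degree (top word length) of an element of the free algebra. -/
noncomputable def dW (f : MonoidAlgebra K (FreeMonoid X)) : ℕ :=
  f.coeff.support.sup (fun w => w.length)

/-- The leading homogeneous part of an element of the free algebra. -/
noncomputable def LHm (f : MonoidAlgebra K (FreeMonoid X)) : MonoidAlgebra K (FreeMonoid X) :=
  MonoidAlgebra.ofCoeff (Finsupp.filter (fun w => w.length = dW f) f.coeff)

/-- The set of leading homogeneous parts of the nonzero elements of `S`. -/
noncomputable def LHset (S : Set (MonoidAlgebra K (FreeMonoid X))) :
    Set (MonoidAlgebra K (FreeMonoid X)) :=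
  LHm '' (S \ {0})

/-- A graded (length-compatible) ordering: words of smaller length are smaller. -/
def GradedOrder (X : Type*) [LinearOrder (FreeMonoid X)] : Prop :=
  ∀ u v : FreeMonoid X, u.length < v.length → u < v

/-- A monomial ordering: compatible with multiplication on both sides. -/
def MonomialOrder' (X : Type*) [LinearOrder (FreeMonoid X)] : Prop :=
  ∀ u v w : FreeMonoid X, u < v → w * u < w * v ∧ u * w < v * w
/-- The homogenization `f*` of an element of the free algebra, with respect to the central
commuting variable `t = X` of degree `1`. -/
noncomputable def homogF (f : MonoidAlgebra K (FreeMonoid X)) :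
    Polynomial (MonoidAlgebra K (FreeMonoid X)) :=
  ∑ w ∈ f.coeff.support,
    Polynomial.C (MonoidAlgebra.single w (f.coeff w)) * Polynomial.X ^ (dW f - w.length)
/-- The monomials `w t^r` occurring in an element of `K⟨X⟩[t]`, as elements of the
lexicographic product. -/
noncomputable def monomialsT (F : Polynomial (MonoidAlgebra K (FreeMonoid X))) :
    Finset (Lex (FreeMonoid X × ℕ)) :=
  F.support.biUnion (fun r => (F.coeff r).coeff.support.image (fun w => toLex (w, r)))

/-- The leading monomial of an element of `K⟨X⟩[t]` with respect to the extension of the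
monomial ordering given by `w₁t^{r₁} ≻ w₂t^{r₂}` iff `w₁ ≻ w₂`, or `w₁ = w₂` and `r₁ > r₂`
(junk value `1·t^0` for `0`). -/
noncomputable def lmt (F : Polynomial (MonoidAlgebra K (FreeMonoid X))) :
    Lex (FreeMonoid X × ℕ) :=
  WithBot.unbotD (toLex (1, 0)) (monomialsT F).max

/-- The set of leading monomials (viewed as elements of `K⟨X⟩[t]`) of the nonzero
elements of `S`. -/
noncomputable def LMTset (S : Set (Polynomial (MonoidAlgebra K (FreeMonoid X)))) :
    Set (Polynomial (MonoidAlgebra K (FreeMonoid X))) :=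
  (fun F => Polynomial.C (MonoidAlgebra.single ((ofLex (lmt F)).1) (1 : K)) *
      Polynomial.X ^ ((ofLex (lmt F)).2)) '' (S \ {0})

/-!
The ordering on `K⟨X⟩[t]` compares words first and is graded, so the leading monomial of `g*` is
`lm g · t⁰`: the leading monomials of `𝒢*` are those of `𝒢`. For the ideal, let `F ∈ ⟨I*⟩` have
leading monomial `w tʳ`. The substitution `x ↦ s x`, `t ↦ s` sends `g*` to `g s^(deg g)`, hence
sends `⟨I*⟩` to polynomials in `s` with coefficients in `I`, and the coefficient of `s^(|w| + r)`
is an element of `I` with leading word `w`. So `LM⟨I*⟩` and `LM(𝒢*)` generate the extensions to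
`K⟨X⟩[t]` of the ideals generated by `LM(I)` and `LM(𝒢)`, and since `t ↦ 0` retracts
`K⟨X⟩[t]` onto `K⟨X⟩`, the two extensions agree iff the ideals do.
-/

theorem Finset.unbotD_max_eq_max' {β : Type*} [LinearOrder β] {s : Finset β} (hs : s.Nonempty)
    (d : β) : WithBot.unbotD d s.max = s.max' hs := by
  rw [← Finset.coe_max' hs, WithBot.unbotD_coe]

namespace TwoSidedIdeal

variable {R S : Type*} [Ring R] [Ring S]

theorem span_le_comap_span_image (φ : R →+* S) (s : Set R) :
    span s ≤ (span (φ '' s)).comap φ :=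
  span_le.2 fun x hx => (mem_comap φ).2 (subset_span ⟨x, hx, rfl⟩)

theorem map_span (φ : R →+* S) (s : Set R) : (span s).map φ = span (φ '' s) :=
  le_antisymm
    (span_le.2 <| Set.image_subset_iff.2 fun _ hx =>
      (mem_comap φ).1 (span_le_comap_span_image φ s hx))
    (span_mono (Set.image_mono subset_span))

theorem span_image_eq_span_image_iff {φ : R →+* S} (ψ : S →+* R) (hψφ : ∀ x, ψ (φ x) = x)
    {s t : Set R} : span (φ '' s) = span (φ '' t) ↔ span s = span t := by
  have hψφ' : ∀ u : Set R, ψ '' (φ '' u) = u := fun u => by simp [Set.image_image, hψφ]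
  refine ⟨fun h => ?_, fun h => by rw [← map_span φ s, ← map_span φ t, h]⟩
  rw [← hψφ' s, ← hψφ' t, ← map_span ψ (φ '' s), ← map_span ψ (φ '' t), h]

noncomputable def polynomial (I : TwoSidedIdeal R) : TwoSidedIdeal (Polynomial R) :=
  .mk' {p | ∀ n, p.coeff n ∈ I} (fun _ => by simp [I.zero_mem])
    (fun hp hq n => by simpa using I.add_mem (hp n) (hq n))
    (fun hp n => by simpa using I.neg_mem (hp n))
    (fun hq n => by
      rw [Polynomial.coeff_mul]
      exact I.finsetSum_mem _ _ fun x _ => I.mul_mem_left _ _ (hq x.2))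
    (fun hp n => by
      rw [Polynomial.coeff_mul]
      exact I.finsetSum_mem _ _ fun x _ => I.mul_mem_right _ _ (hp x.1))

theorem mem_polynomial {I : TwoSidedIdeal R} {p : Polynomial R} :
    p ∈ I.polynomial ↔ ∀ n, p.coeff n ∈ I :=
  mem_mk' ..

end TwoSidedIdeal

section Scaling

open Polynomial (C)

variable {α R : Type*} [CommRing R]

noncomputable def scaleByLength :
    MonoidAlgebra R (FreeMonoid α) →ₐ[R] Polynomial (MonoidAlgebra R (FreeMonoid α)) :=
  MonoidAlgebra.lift R _ _
    { toFun := fun w => C (MonoidAlgebra.single w 1) * Polynomial.X ^ w.length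
      map_one' := by rw [FreeMonoid.length_one, pow_zero, mul_one, ← MonoidAlgebra.one_def, C_1]
      map_mul' := fun u v => by
        have h : MonoidAlgebra.single (u * v) (1 : R) =
            MonoidAlgebra.single u 1 * MonoidAlgebra.single v 1 := by
          rw [MonoidAlgebra.single_mul_single, mul_one]
        rw [h, C_mul, FreeMonoid.length_mul, pow_add]
        simp only [mul_assoc]
        rw [← mul_assoc (Polynomial.X ^ u.length), Polynomial.X_pow_mul (p := C _), mul_assoc] }

theorem scaleByLength_single (w : FreeMonoid α) (c : R) :
    scaleByLength (MonoidAlgebra.single w c) =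
      C (MonoidAlgebra.single w c) * Polynomial.X ^ w.length := by
  rw [scaleByLength, MonoidAlgebra.lift_single, MonoidHom.coe_mk, OneHom.coe_mk, ← smul_mul_assoc,
    Polynomial.smul_C, MonoidAlgebra.smul_single, smul_eq_mul, mul_one]

/-- The substitution `x ↦ s x`, `t ↦ s`, which collects the homogeneous components of an element
of `R⟨α⟩[t]` (for the total degree) as the coefficients of a polynomial in `s`. -/
noncomputable def scaleByTotalDegree :
    Polynomial (MonoidAlgebra R (FreeMonoid α)) →+* Polynomial (MonoidAlgebra R (FreeMonoid α)) :=
  Polynomial.eval₂RingHom' scaleByLength.toRingHom Polynomial.X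
    fun _ => (Polynomial.commute_X _).symm

theorem scaleByTotalDegree_C_mul_X_pow (w : FreeMonoid α) (c : R) (r : ℕ) :
    scaleByTotalDegree (C (MonoidAlgebra.single w c) * Polynomial.X ^ r) =
      C (MonoidAlgebra.single w c) * Polynomial.X ^ (w.length + r) := by
  have hC (a : MonoidAlgebra R (FreeMonoid α)) : scaleByTotalDegree (C a) = scaleByLength a :=
    Polynomial.eval₂_C _ _
  have hX : scaleByTotalDegree (Polynomial.X : Polynomial (MonoidAlgebra R (FreeMonoid α))) =
      Polynomial.X := Polynomial.eval₂_X _ _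
  rw [map_mul, map_pow, hC, hX, scaleByLength_single, pow_add, mul_assoc]

theorem coeff_coeff_scaleByTotalDegree (F : Polynomial (MonoidAlgebra R (FreeMonoid α))) (n : ℕ)
    (w : FreeMonoid α) :
    ((scaleByTotalDegree F).coeff n).coeff w =
      if w.length ≤ n then (F.coeff (n - w.length)).coeff w else 0 := by
  induction F using Polynomial.induction_on' with
  | add F G hF hG => split_ifs at hF hG ⊢ <;> simp_all
  | monomial r a =>
    induction a using MonoidAlgebra.induction_linear with
    | zero => simp
    | add a b ha hb => split_ifs at ha hb ⊢ <;> simp_all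
    | single u c =>
      simp only [← Polynomial.C_mul_X_pow_eq_monomial, scaleByTotalDegree_C_mul_X_pow,
        Polynomial.coeff_C_mul_X_pow]
      by_cases hwu : u = w
      · subst hwu
        split_ifs <;> first | rfl | omega
      · have hw : (MonoidAlgebra.single u c).coeff w = 0 := Finsupp.single_eq_of_ne (Ne.symm hwu)
        split_ifs <;> first | rfl | exact hw | exact hw.symm

end Scaling

section Homogenization

open Polynomial (C)

variable {α : Type*}

theorem le_dW {g : MonoidAlgebra K (FreeMonoid α)} {w : FreeMonoid α} (hw : w ∈ g.coeff.support) :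
    w.length ≤ dW g :=
  Finset.le_sup (f := FreeMonoid.length) hw

theorem coeff_coeff_homogF (g : MonoidAlgebra K (FreeMonoid α)) (r : ℕ) (w : FreeMonoid α) :
    ((homogF g).coeff r).coeff w = if dW g - w.length = r then g.coeff w else 0 := by
  simp only [homogF, Polynomial.finsetSum_coeff, Polynomial.coeff_C_mul_X_pow,
    MonoidAlgebra.coeff_sum, Finsupp.finsetSum_apply]
  rw [Finset.sum_eq_single w]
  · split_ifs <;> first | omega | exact Finsupp.single_eq_same | rfl
  · intro u _ hu
    split_ifs
    · exact Finsupp.single_eq_of_ne (Ne.symm hu)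
    · rfl
  · intro hw
    rw [Finsupp.notMem_support_iff.1 hw]
    split_ifs <;> simp

theorem scaleByTotalDegree_homogF (g : MonoidAlgebra K (FreeMonoid α)) :
    scaleByTotalDegree (homogF g) = C g * Polynomial.X ^ dW g := by
  have hterm : ∀ w ∈ g.coeff.support,
      scaleByTotalDegree
          (C (MonoidAlgebra.single w (g.coeff w)) * Polynomial.X ^ (dW g - w.length)) =
        C (MonoidAlgebra.single w (g.coeff w)) * Polynomial.X ^ dW g := fun w hw => by
    rw [scaleByTotalDegree_C_mul_X_pow, Nat.add_sub_cancel' (le_dW hw)]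
  rw [homogF, map_sum, Finset.sum_congr rfl hterm, ← Finset.sum_mul, ← map_sum]
  congr 2
  exact MonoidAlgebra.sum_coeff_single g

theorem homogF_ne_zero {g : MonoidAlgebra K (FreeMonoid α)} (hg : g ≠ 0) : homogF g ≠ 0 := by
  intro h
  have hcoeff := congrArg (fun F => F.coeff (dW g)) (scaleByTotalDegree_homogF g)
  simp only [h, map_zero, Polynomial.coeff_zero, Polynomial.coeff_C_mul_X_pow, if_true] at hcoeff
  exact hg hcoeff.symm

theorem coeff_scaleByTotalDegree_mem {I : TwoSidedIdeal (MonoidAlgebra K (FreeMonoid α))}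
    {F : Polynomial (MonoidAlgebra K (FreeMonoid α))}
    (hF : F ∈ TwoSidedIdeal.span (homogF '' (I : Set (MonoidAlgebra K (FreeMonoid α))))) (n : ℕ) :
    (scaleByTotalDegree F).coeff n ∈ I := by
  suffices TwoSidedIdeal.span (homogF '' (I : Set (MonoidAlgebra K (FreeMonoid α)))) ≤
      I.polynomial.comap scaleByTotalDegree from
    TwoSidedIdeal.mem_polynomial.1 ((TwoSidedIdeal.mem_comap _).1 (this hF)) n
  refine TwoSidedIdeal.span_le.2 ?_
  rintro _ ⟨g, hg, rfl⟩
  refine (TwoSidedIdeal.mem_comap _).2 (TwoSidedIdeal.mem_polynomial.2 fun m => ?_)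
  rw [scaleByTotalDegree_homogF, Polynomial.coeff_C_mul_X_pow]
  split_ifs
  exacts [hg, I.zero_mem]

end Homogenization

section LeadingMonomials

variable {f : MonoidAlgebra K (FreeMonoid X)} {F : Polynomial (MonoidAlgebra K (FreeMonoid X))}

theorem mem_monomialsT {w : FreeMonoid X} {r : ℕ} :
    toLex (w, r) ∈ monomialsT F ↔ (F.coeff r).coeff w ≠ 0 := by
  simp only [monomialsT, Finset.mem_biUnion, Finset.mem_image, toLex_inj, Prod.mk.injEq,
    Polynomial.mem_support_iff, Finsupp.mem_support_iff]
  constructor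
  · rintro ⟨r, -, w, hw, rfl, rfl⟩
    exact hw
  · intro hw
    exact ⟨r, fun h => hw (by rw [h]; rfl), w, hw, rfl, rfl⟩

theorem lm_eq_max' (hf : f.coeff.support.Nonempty) : lm f = f.coeff.support.max' hf :=
  Finset.unbotD_max_eq_max' hf 1

theorem lm_mem_support (hf : f ≠ 0) : lm f ∈ f.coeff.support := by
  have hs := Finsupp.support_nonempty_iff.2 (mt MonoidAlgebra.coeff_eq_zero.1 hf)
  rw [lm_eq_max' hs]
  exact Finset.max'_mem _ _

theorem le_lm {w : FreeMonoid X} (hw : w ∈ f.coeff.support) : w ≤ lm f := by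
  rw [lm_eq_max' ⟨w, hw⟩]
  exact Finset.le_max' _ _ hw

theorem lm_eq_of_forall_le {m : FreeMonoid X} (hm : m ∈ f.coeff.support)
    (hle : ∀ w ∈ f.coeff.support, w ≤ m) : lm f = m := by
  rw [lm_eq_max' ⟨m, hm⟩]
  exact le_antisymm (Finset.max'_le _ _ _ hle) (Finset.le_max' _ _ hm)

theorem length_lm (hgr : GradedOrder X) (hf : f ≠ 0) : (lm f).length = dW f := by
  obtain ⟨w, hw, hdW⟩ := Finset.exists_mem_eq_sup f.coeff.support
    (Finsupp.support_nonempty_iff.2 (mt MonoidAlgebra.coeff_eq_zero.1 hf)) FreeMonoid.length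
  refine le_antisymm (le_dW (lm_mem_support hf)) ?_
  rw [dW, hdW]
  exact not_lt.1 fun hlt => (le_lm hw).not_gt (hgr _ _ hlt)

theorem lmt_eq_max' (hF : (monomialsT F).Nonempty) : lmt F = (monomialsT F).max' hF :=
  Finset.unbotD_max_eq_max' hF _

theorem lmt_mem_monomialsT (hF : F ≠ 0) : lmt F ∈ monomialsT F := by
  obtain ⟨r, hr⟩ := Polynomial.support_nonempty.2 hF
  obtain ⟨w, hw⟩ := Finsupp.support_nonempty_iff.2
    (mt MonoidAlgebra.coeff_eq_zero.1 (Polynomial.mem_support_iff.1 hr))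
  rw [lmt_eq_max' ⟨_, mem_monomialsT.2 (Finsupp.mem_support_iff.1 hw)⟩]
  exact Finset.max'_mem _ _

theorem le_lmt {m : Lex (FreeMonoid X × ℕ)} (hm : m ∈ monomialsT F) : m ≤ lmt F := by
  rw [lmt_eq_max' ⟨m, hm⟩]
  exact Finset.le_max' _ _ hm

theorem lmt_eq_of_forall_le {m : Lex (FreeMonoid X × ℕ)} (hm : m ∈ monomialsT F)
    (hle : ∀ x ∈ monomialsT F, x ≤ m) : lmt F = m := by
  rw [lmt_eq_max' ⟨m, hm⟩]
  exact le_antisymm (Finset.max'_le _ _ _ hle) (Finset.le_max' _ _ hm)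

end LeadingMonomials

section GroebnerBases

open Polynomial (C)

theorem lmt_homogF (hgr : GradedOrder X) {g : MonoidAlgebra K (FreeMonoid X)} (hg : g ≠ 0) :
    lmt (homogF g) = toLex (lm g, 0) := by
  have hlen := length_lm hgr hg
  refine lmt_eq_of_forall_le ?_ fun m hm => ?_
  · rw [mem_monomialsT, coeff_coeff_homogF, if_pos (by omega)]
    exact Finsupp.mem_support_iff.1 (lm_mem_support hg)
  · obtain ⟨⟨w, r⟩, rfl⟩ := toLex.surjective m
    rw [mem_monomialsT, coeff_coeff_homogF] at hm
    split_ifs at hm with hr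
    · have hw : w ≤ lm g := le_lm (Finsupp.mem_support_iff.2 hm)
      rw [Prod.Lex.toLex_le_toLex]
      rcases hw.lt_or_eq with hlt | rfl
      · exact Or.inl hlt
      · exact Or.inr ⟨rfl, by omega⟩
    · exact absurd rfl hm

theorem exists_lm_eq_fst_lmt {I : TwoSidedIdeal (MonoidAlgebra K (FreeMonoid X))}
    {F : Polynomial (MonoidAlgebra K (FreeMonoid X))}
    (hF : F ∈ TwoSidedIdeal.span (homogF '' (I : Set (MonoidAlgebra K (FreeMonoid X)))))
    (hF0 : F ≠ 0) : ∃ h ∈ I, h ≠ 0 ∧ lm h = (ofLex (lmt F)).1 := by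
  obtain ⟨⟨w, r⟩, hwr⟩ := toLex.surjective (lmt F)
  set h := (scaleByTotalDegree F).coeff (w.length + r)
  have hcoeff (v : FreeMonoid X) : h.coeff v = if v.length ≤ w.length + r then
      (F.coeff (w.length + r - v.length)).coeff v else 0 :=
    coeff_coeff_scaleByTotalDegree F _ v
  have hw : w ∈ h.coeff.support := by
    rw [Finsupp.mem_support_iff, hcoeff, if_pos (Nat.le_add_right _ _), Nat.add_sub_cancel_left,
      ← mem_monomialsT, hwr]
    exact lmt_mem_monomialsT hF0
  have hle : ∀ v ∈ h.coeff.support, v ≤ w := by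
    intro v hv
    rw [Finsupp.mem_support_iff, hcoeff] at hv
    split_ifs at hv
    · simpa [← hwr] using Prod.Lex.monotone_fst _ _ (le_lmt (mem_monomialsT.2 hv))
    · exact absurd rfl hv
  refine ⟨h, coeff_scaleByTotalDegree_mem hF _, ?_, ?_⟩
  · rintro h0
    simp [h0] at hw
  · rw [← hwr, ofLex_toLex]
    exact lm_eq_of_forall_le hw hle

theorem LMTset_mono {S T : Set (Polynomial (MonoidAlgebra K (FreeMonoid X)))} (h : S ⊆ T) :
    LMTset S ⊆ LMTset T :=
  Set.image_mono (Set.sdiff_subset_sdiff_left h)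

theorem LMTset_image_homogF (hgr : GradedOrder X) (S : Set (MonoidAlgebra K (FreeMonoid X))) :
    LMTset (homogF '' S) = C '' LMset S := by
  ext y
  constructor
  · rintro ⟨_, ⟨⟨g, hg, rfl⟩, hg0⟩, rfl⟩
    have hg0 : g ≠ 0 := by
      rintro rfl
      exact hg0 (by simp [homogF])
    exact ⟨_, ⟨g, ⟨hg, hg0⟩, rfl⟩, by simp [lmt_homogF hgr hg0]⟩
  · rintro ⟨_, ⟨g, ⟨hg, hg0⟩, rfl⟩, rfl⟩
    exact ⟨homogF g, ⟨⟨g, hg, rfl⟩, homogF_ne_zero hg0⟩, by simp [lmt_homogF hgr hg0]⟩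

theorem span_LMTset_span_image_homogF (hgr : GradedOrder X)
    (I : TwoSidedIdeal (MonoidAlgebra K (FreeMonoid X))) :
    TwoSidedIdeal.span (LMTset
        ((TwoSidedIdeal.span (homogF '' (I : Set (MonoidAlgebra K (FreeMonoid X)))) :
          TwoSidedIdeal (Polynomial (MonoidAlgebra K (FreeMonoid X)))) :
            Set (Polynomial (MonoidAlgebra K (FreeMonoid X))))) =
      TwoSidedIdeal.span (C '' LMset (I : Set (MonoidAlgebra K (FreeMonoid X)))) := by
  refine le_antisymm (TwoSidedIdeal.span_le.2 ?_) ?_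
  · rintro _ ⟨F, ⟨hF, hF0⟩, rfl⟩
    obtain ⟨h, hI, hh0, hlm⟩ := exists_lm_eq_fst_lmt hF hF0
    show _ * _ ∈ _
    rw [← hlm]
    exact TwoSidedIdeal.mul_mem_right _ _ _
      (TwoSidedIdeal.subset_span ⟨_, ⟨h, ⟨hI, hh0⟩, rfl⟩, rfl⟩)
  · rw [← LMTset_image_homogF hgr]
    exact TwoSidedIdeal.span_mono (LMTset_mono TwoSidedIdeal.subset_span)

end GroebnerBases

theorem stmt17_general (hgr : GradedOrder X)
    (I : TwoSidedIdeal (MonoidAlgebra K (FreeMonoid X)))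
    (G : Set (MonoidAlgebra K (FreeMonoid X))) :
    TwoSidedIdeal.span (LMset (I : Set (MonoidAlgebra K (FreeMonoid X)))) =
        TwoSidedIdeal.span (LMset G) ↔
      TwoSidedIdeal.span (LMTset
          ((TwoSidedIdeal.span (homogF '' (I : Set (MonoidAlgebra K (FreeMonoid X)))) :
            TwoSidedIdeal (Polynomial (MonoidAlgebra K (FreeMonoid X)))) :
              Set (Polynomial (MonoidAlgebra K (FreeMonoid X))))) =
        TwoSidedIdeal.span (LMTset (homogF '' G)) := by
  rw [span_LMTset_span_image_homogF hgr I, LMTset_image_homogF hgr G]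
  exact (TwoSidedIdeal.span_image_eq_span_image_iff Polynomial.constantCoeff
    fun _ => Polynomial.coeff_C_zero).symm

/-- `𝒢 ⊆ I` is a Gröbner basis of `I` in `K⟨X⟩` iff
`𝒢* = {g* : g ∈ 𝒢}` is a Gröbner basis of the homogenization ideal `⟨I*⟩` in `K⟨X⟩[t]`,
with respect to the extended monomial ordering. -/
theorem stmt17 (hgr : GradedOrder X) (hmo : MonomialOrder' X)
    (hwf : WellFoundedLT (FreeMonoid X))
    (I : TwoSidedIdeal (MonoidAlgebra K (FreeMonoid X)))
    (G : Set (MonoidAlgebra K (FreeMonoid X))) (hGI : G ⊆ (I : Set _)) :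
    TwoSidedIdeal.span (LMset (I : Set (MonoidAlgebra K (FreeMonoid X)))) =
        TwoSidedIdeal.span (LMset G) ↔
      TwoSidedIdeal.span (LMTset
          ((TwoSidedIdeal.span (homogF '' (I : Set (MonoidAlgebra K (FreeMonoid X)))) :
            TwoSidedIdeal (Polynomial (MonoidAlgebra K (FreeMonoid X)))) :
              Set (Polynomial (MonoidAlgebra K (FreeMonoid X))))) =
        TwoSidedIdeal.span (LMTset (homogF '' G)) :=
  stmt17_general hgr I G
end
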